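/- For every integer n ≥ 1 there exists a nontrivial element w of the free group F_2 on two generators with word length |w| ≤ 4n³ + 4n² such that for every finite group H with |H| ≤ n and every group homomorphism φ : F_2 → H one has φ(w) = 1. (Consequently F_{F_k}(n) ≽ n^{1/3}.) -/

import Mathlib

/-!
Write `a, b` for the free generators. The commutator `⁅b, a ^ d⁆` dies under every `φ` with
`φ a ^ d = 1`, and `⁅b * u * b⁻¹, a * v * a⁻¹⁆` dies as soon as `u` or `v` does. Nesting such
commutators in a balanced binary tree of depth `k = ⌈log₂ n⌉` whose leaves are `⁅b, a ^ d⁆`,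
`d = 1, …, n` (padded with `d = 1`), gives a word killed by every `φ` into a group of order
at most `n`, since `d = orderOf (φ a)` occurs among the leaves.

The conjugations by `b` and `a` leave no cancellation at any junction: the reduced word of every
node begins with `b` and ends with `a⁻¹`, so in particular `w ≠ 1`. The lengths satisfy
`L ≤ 2 L' + 2 L'' + 8` at each node, and summing over the tree with `2 ^ k ≤ 2 (n - 1)` gives
`4 n³ + 4 n²`.
-/

open scoped commutatorElement

section CommTree

variable {G H : Type*} [Group G] [Group H]

def commTree (a b : G) (f : ℕ → ℕ) : ℕ → G
  | 0 => ⁅b, a ^ f 0⁆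
  | k + 1 => ⁅b * commTree a b f k * b⁻¹, a * commTree a b (fun j => f (2 ^ k + j)) k * a⁻¹⁆

theorem map_commTree (φ : G →* H) (a b : G) (f : ℕ → ℕ) (k : ℕ) :
    φ (commTree a b f k) = commTree (φ a) (φ b) f k := by
  induction k generalizing f with
  | zero => simp [commTree, map_commutatorElement]
  | succ k ih => simp [commTree, map_commutatorElement, ih]

theorem commTree_eq_one {a : G} (b : G) {f : ℕ → ℕ} {k j : ℕ} (hj : j < 2 ^ k)
    (ha : a ^ f j = 1) : commTree a b f k = 1 := by
  induction k generalizing f j with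
  | zero =>
    obtain rfl : j = 0 := by simpa using hj
    simp [commTree, ha, commutatorElement_one_right]
  | succ k ih =>
    rcases lt_or_ge j (2 ^ k) with hjk | hjk
    · simp [commTree, ih hjk ha, commutatorElement_one_left]
    · obtain ⟨j, rfl⟩ := Nat.exists_eq_add_of_le hjk
      have hj : j < 2 ^ k := by rw [pow_succ] at hj; omega
      simp [commTree, ih (f := fun j => f (2 ^ k + j)) hj ha, commutatorElement_one_right]

end CommTree

namespace FreeGroup

variable {α : Type*} [DecidableEq α]

theorem norm_commutatorElement_le (x y : FreeGroup α) :
    norm ⁅x, y⁆ ≤ 2 * norm x + 2 * norm y := by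
  have := norm_mul_le (x * y * x⁻¹) y⁻¹
  have := norm_mul_le (x * y) x⁻¹
  have := norm_mul_le x y
  rw [commutatorElement_def]
  simp only [norm_inv_eq] at *
  omega

theorem norm_of_mul_mul_inv_le (a : α) (x : FreeGroup α) :
    norm (of a * x * (of a)⁻¹) ≤ norm x + 2 := by
  have := norm_mul_le (of a * x) (of a)⁻¹
  have := norm_mul_le (of a) x
  rw [norm_inv_eq, norm_of] at *
  omega

def HasEnds (x : FreeGroup α) (s t : α × Bool) : Prop :=
  x.toWord.head? = some s ∧ x.toWord.getLast? = some t

section HasEnds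

variable {x y : FreeGroup α} {s t s' t' : α × Bool}

theorem HasEnds.ne_one (hx : HasEnds x s t) : x ≠ 1 := by
  rintro rfl
  simp [HasEnds] at hx

theorem HasEnds.toWord_mul_eq_append (hx : HasEnds x s t) (hy : HasEnds y s' t')
    (h : IsReduced [t, s']) : (x * y).toWord = x.toWord ++ y.toWord := by
  rw [toWord_mul]
  refine IsReduced.reduce_eq (List.isChain_append.2 ⟨isReduced_toWord, isReduced_toWord, ?_⟩)
  simp only [hx.2, hy.1, Option.mem_some_iff]
  rintro _ rfl _ rfl
  exact (isReduced_cons_cons.1 h).1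

theorem HasEnds.mul (hx : HasEnds x s t) (hy : HasEnds y s' t') (h : IsReduced [t, s']) :
    HasEnds (x * y) s t' := by
  have hy₀ : y.toWord ≠ [] := fun h₀ => by simp [HasEnds, h₀] at hy
  rw [HasEnds, hx.toWord_mul_eq_append hy h, List.head?_append, hx.1,
    List.getLast?_append_of_ne_nil _ hy₀, hy.2]
  exact ⟨rfl, rfl⟩

theorem HasEnds.inv (hx : HasEnds x s t) : HasEnds x⁻¹ (t.1, !t.2) (s.1, !s.2) := by
  rw [HasEnds, toWord_inv, invRev, List.head?_reverse, List.getLast?_reverse,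
    List.getLast?_map, List.head?_map, hx.1, hx.2]
  exact ⟨rfl, rfl⟩

theorem hasEnds_of_pow (a : α) {d : ℕ} (hd : d ≠ 0) : HasEnds (of a ^ d) (a, true) (a, true) := by
  simp [HasEnds, toWord_of_pow, List.head?_replicate, List.getLast?_replicate, hd]

theorem hasEnds_of (a : α) : HasEnds (of a) (a, true) (a, true) := by
  simp [HasEnds, toWord_of]

theorem HasEnds.conj (hx : HasEnds x s t) (a : α) (hs : IsReduced [(a, true), s])
    (ht : IsReduced [t, (a, false)]) :
    HasEnds (of a * x * (of a)⁻¹) (a, true) (a, false) :=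
  ((hasEnds_of a).mul hx hs).mul (hasEnds_of a).inv ht

theorem HasEnds.commutatorElement (hx : HasEnds x s t) (hy : HasEnds y s' t')
    (h₁ : IsReduced [t, s']) (h₂ : IsReduced [t', (t.1, !t.2)])
    (h₃ : IsReduced [(s.1, !s.2), (t'.1, !t'.2)]) :
    HasEnds ⁅x, y⁆ s (s'.1, !s'.2) :=
  ((hx.mul hy h₁).mul hx.inv h₂).mul hy.inv h₃

end HasEnds

theorem hasEnds_commTree {x y : α} (hxy : x ≠ y) {f : ℕ → ℕ} (hf : ∀ j, f j ≠ 0) (k : ℕ) :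
    HasEnds (commTree (of x) (of y) f k) (y, true) (x, false) := by
  have hne : ∀ {p q : α × Bool}, p.1 ≠ q.1 → IsReduced [p, q] := fun h =>
    isReduced_cons_cons.2 ⟨fun h' => absurd h' h, IsReduced.singleton⟩
  have hself : ∀ p : α × Bool, IsReduced [p, p] := fun _ =>
    isReduced_cons_cons.2 ⟨fun _ => rfl, IsReduced.singleton⟩
  induction k generalizing f with
  | zero =>
    exact (hasEnds_of y).commutatorElement (hasEnds_of_pow x (hf 0))
      (hne hxy.symm) (hne hxy) (hne hxy.symm)
  | succ k ih =>
    exact ((ih hf).conj y (hself _) (hne hxy)).commutatorElement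
      ((ih fun j => hf _).conj x (hne hxy) (hself _)) (hne hxy.symm) (hne hxy) (hne hxy.symm)

theorem norm_commTree_le (x y : α) (f : ℕ → ℕ) (k : ℕ) :
    3 * norm (commTree (of x) (of y) f k) + 8 ≤
      3 * 2 ^ k * ∑ j ∈ Finset.range (2 ^ k), (2 * f j + 2) + 8 * (2 ^ k) ^ 2 := by
  induction k generalizing f with
  | zero =>
    have := norm_commutatorElement_le (of y) (of x ^ f 0)
    simp only [norm_of, norm_of_pow] at this
    simp only [commTree, pow_zero, one_pow, Finset.sum_range_one]
    omega
  | succ k ih =>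
    have hnode := norm_commutatorElement_le (of y * commTree (of x) (of y) f k * (of y)⁻¹)
      (of x * commTree (of x) (of y) (fun j => f (2 ^ k + j)) k * (of x)⁻¹)
    have := norm_of_mul_mul_inv_le y (commTree (of x) (of y) f k)
    have := norm_of_mul_mul_inv_le x (commTree (of x) (of y) (fun j => f (2 ^ k + j)) k)
    have := ih f
    have := ih fun j => f (2 ^ k + j)
    rw [pow_succ, mul_two, Finset.sum_range_add]
    simp only [commTree] at hnode ⊢
    nlinarith

end FreeGroup

def paddedExponent (n j : ℕ) : ℕ := if j < n then j + 1 else 1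

theorem sum_paddedExponent {n P : ℕ} (h : n ≤ P) :
    ∑ j ∈ Finset.range P, (2 * paddedExponent n j + 2) + n = n ^ 2 + 4 * P := by
  obtain ⟨m, rfl⟩ := Nat.exists_eq_add_of_le h
  have hhead : ∀ l ≤ n,
      ∑ j ∈ Finset.range l, (2 * paddedExponent n j + 2) + l = l ^ 2 + 4 * l := by
    intro l hl
    induction l with
    | zero => simp
    | succ l ih =>
      rw [Finset.sum_range_succ, paddedExponent, if_pos (by omega)]
      nlinarith [ih (by omega)]
  have htail : ∑ j ∈ Finset.range m, (2 * paddedExponent n (n + j) + 2) = 4 * m := by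
    simp [paddedExponent, mul_comm]
  rw [Finset.sum_range_add, htail]
  have := hhead n le_rfl
  omega

theorem two_pow_clog_le (n : ℕ) : 2 ^ Nat.clog 2 n ≤ max 1 (2 * (n - 1)) := by
  rcases Nat.lt_or_ge 1 n with hn | hn
  · have hlt := Nat.pow_pred_clog_lt_self one_lt_two hn
    have hpos := Nat.clog_pos one_lt_two hn
    rw [← Nat.succ_pred_eq_of_pos hpos, pow_succ]
    omega
  · simp [Nat.clog_of_right_le_one hn]

theorem le_four_mul_cube_add_four_mul_sq {n P S L : ℕ} (hn : 1 ≤ n) (hnP : n ≤ P)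
    (hP : P ≤ max 1 (2 * (n - 1)))
    (hL : 3 * L + 8 ≤ 3 * P * S + 8 * P ^ 2) (hS : S + n = n ^ 2 + 4 * P) :
    L ≤ 4 * n ^ 3 + 4 * n ^ 2 := by
  obtain ⟨q, rfl⟩ := Nat.exists_eq_add_of_le' hn
  rcases Nat.eq_zero_or_pos q with rfl | hq
  · have : P = 1 := by omega
    subst this
    omega
  · have hP : P ≤ 2 * q := by omega
    zify at *
    nlinarith [mul_nonneg (by linarith : (0 : ℤ) ≤ 2 * q - P) (by linarith : (0 : ℤ) ≤ P - (q + 1)),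
      mul_nonneg (Int.natCast_nonneg q) (sq_nonneg ((q : ℤ) - 3))]

/-- For every integer `n ≥ 1` there exists a nontrivial element `w` of the free group
on two generators, of word length at most `4n³ + 4n²`, such that every homomorphism
from the free group to a finite group of order at most `n` kills `w`. -/
theorem stmt_1 (n : ℕ) (hn : 1 ≤ n) :
    ∃ w : FreeGroup (Fin 2), w ≠ 1 ∧
      (FreeGroup.toWord w).length ≤ 4 * n ^ 3 + 4 * n ^ 2 ∧
      ∀ (H : Type) (_ : Group H) (_ : Finite H),
        Nat.card H ≤ n →
        ∀ φ : FreeGroup (Fin 2) →* H, φ w = 1 := by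
  set k := Nat.clog 2 n
  set a : FreeGroup (Fin 2) := FreeGroup.of 0
  have hnk : n ≤ 2 ^ k := Nat.le_pow_clog one_lt_two n
  have hf : ∀ j, paddedExponent n j ≠ 0 := fun j => by unfold paddedExponent; split <;> omega
  refine ⟨commTree a (FreeGroup.of 1) (paddedExponent n) k,
    (FreeGroup.hasEnds_commTree (by decide) hf k).ne_one,
    le_four_mul_cube_add_four_mul_sq hn hnk (two_pow_clog_le n)
      (FreeGroup.norm_commTree_le 0 1 _ k) (sum_paddedExponent hnk), ?_⟩
  intro H _ _ hcard φ
  rw [map_commTree]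
  have hd : 0 < orderOf (φ a) := orderOf_pos_iff.2 (isOfFinOrder_of_finite _)
  have hdn : orderOf (φ a) ≤ n := orderOf_le_card.trans hcard
  refine commTree_eq_one _ (j := orderOf (φ a) - 1) (by omega) ?_
  rw [paddedExponent, if_pos (by omega), Nat.sub_add_cancel hd]
  exact pow_orderOf_eq_one _
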